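/- Let A be a real m×n matrix with rows a_1,…,a_m, b ∈ ℝ^m, and assume V = {v ∈ ℝ^n : A v ≥ b} is nonempty and bounded. Let x^1,…,x^N ∈ ℝ^K and ω̂ ∈ ℝ^{n×K}, and suppose that for each i = 1,…,N there is ρ̂^i ∈ ℝ^m with ρ̂^i ≥ 0, A^T ρ̂^i = ω̂ x^i, and such that V*(ω̂ x^i) = {v ∈ V : a_j · v = b_j for every j with ρ̂^i_j > 0}. If ω̃ ∈ ℝ^{n×K} and ρ̃^1,…,ρ̃^N ∈ ℝ^m satisfy, for every i, A^T ρ̃^i = ω̃ x^i, ρ̃^i_j ≥ 1 for every j with ρ̂^i_j > 0, and ρ̃^i_j = 0 for every j with ρ̂^i_j = 0, then V*(ω̃ x^i) = V*(ω̂ x^i) for every i = 1,…,N. -/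

import Mathlib

/-! `ρ̃^i` is a nonnegative dual solution for the objective `ω̃ x^i` with the same support as
`ρ̂^i`. Weak duality with equality exactly under complementary slackness shows that, as soon as
some point of `V` is complementary to a nonnegative dual solution `ρ`, the optimal face is the set
of points of `V` that are tight on the support of `ρ`. An optimal point for `ω̂ x^i` exists since
`V` is compact, and it is complementary to `ρ̂^i`, hence to `ρ̃^i`; so both optimal faces are the
points of `V` tight on the common support. -/

open Matrix Set BigOperators

noncomputable section

/-- The polyhedron `V = {v : A v ≥ b}` (inequalities entrywise). -/
def polyV {m n : ℕ} (A : Matrix (Fin m) (Fin n) ℝ) (b : Fin m → ℝ) : Set (Fin n → ℝ) :=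
  {v | b ≤ A.mulVec v}

/-- `z*(c)`: the optimal (infimum) value of `c · v` over `V`. -/
noncomputable def zstar {m n : ℕ} (A : Matrix (Fin m) (Fin n) ℝ) (b : Fin m → ℝ)
    (c : Fin n → ℝ) : ℝ :=
  sInf ((fun v => c ⬝ᵥ v) '' polyV A b)

/-- `V*(c)`: the set of optimal solutions of `min {c · v : v ∈ V}`. -/
def Vstar {m n : ℕ} (A : Matrix (Fin m) (Fin n) ℝ) (b : Fin m → ℝ)
    (c : Fin n → ℝ) : Set (Fin n → ℝ) :=
  {v ∈ polyV A b | c ⬝ᵥ v = zstar A b c}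

theorem dotProduct_eq_dotProduct_iff_of_nonneg {ι : Type*} [Fintype ι] {ρ u w : ι → ℝ}
    (hρ : 0 ≤ ρ) (huw : u ≤ w) :
    ρ ⬝ᵥ u = ρ ⬝ᵥ w ↔ ∀ j, 0 < ρ j → u j = w j := by
  have hgap : ρ ⬝ᵥ w - ρ ⬝ᵥ u = ∑ j, ρ j * (w j - u j) := by
    simp only [dotProduct, ← Finset.sum_sub_distrib, mul_sub]
  have hterm : ∀ j ∈ Finset.univ, 0 ≤ ρ j * (w j - u j) :=
    fun j _ => mul_nonneg (hρ j) (sub_nonneg.2 (huw j))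
  rw [eq_comm, ← sub_eq_zero, hgap, Finset.sum_eq_zero_iff_of_nonneg hterm]
  refine forall_congr' fun j => ?_
  simp only [Finset.mem_univ, true_implies, mul_eq_zero, sub_eq_zero]
  exact ⟨fun h hj => (h.resolve_left hj.ne').symm, fun h =>
    (hρ j).eq_or_lt.elim (fun h0 => Or.inl h0.symm) fun hj => Or.inr (h hj).symm⟩

section Polyhedron

variable {m n : ℕ} {A : Matrix (Fin m) (Fin n) ℝ} {b : Fin m → ℝ} {c : Fin n → ℝ}
  {ρ : Fin m → ℝ}

theorem isCompact_polyV (hbd : Bornology.IsBounded (polyV A b)) : IsCompact (polyV A b) :=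
  Metric.isCompact_of_isClosed_isBounded
    (isClosed_le continuous_const (continuous_const.matrix_mulVec continuous_id)) hbd

theorem Vstar_nonempty (hne : (polyV A b).Nonempty) (hbd : Bornology.IsBounded (polyV A b)) :
    (Vstar A b c).Nonempty := by
  have hcont : Continuous fun v : Fin n → ℝ => c ⬝ᵥ v := continuous_const.dotProduct continuous_id
  obtain ⟨v, hv, hvz⟩ :=
    ((isCompact_polyV hbd).image hcont).sInf_mem (hne.image fun v => c ⬝ᵥ v)
  exact ⟨v, hv, hvz⟩

theorem dotProduct_eq_dotProduct_mulVec_of_transpose_mulVec (hAρ : Aᵀ *ᵥ ρ = c)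
    (v : Fin n → ℝ) : c ⬝ᵥ v = ρ ⬝ᵥ A *ᵥ v := by
  rw [← hAρ, mulVec_transpose, dotProduct_mulVec]

theorem dotProduct_eq_iff_of_transpose_mulVec (hρ : 0 ≤ ρ) (hAρ : Aᵀ *ᵥ ρ = c)
    {v : Fin n → ℝ} (hv : v ∈ polyV A b) :
    c ⬝ᵥ v = ρ ⬝ᵥ b ↔ ∀ j, 0 < ρ j → A j ⬝ᵥ v = b j := by
  rw [dotProduct_eq_dotProduct_mulVec_of_transpose_mulVec hAρ, eq_comm,
    dotProduct_eq_dotProduct_iff_of_nonneg hρ hv]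
  exact forall_congr' fun j => imp_congr_right fun _ => eq_comm

theorem dotProduct_le_of_transpose_mulVec (hρ : 0 ≤ ρ) (hAρ : Aᵀ *ᵥ ρ = c)
    {v : Fin n → ℝ} (hv : v ∈ polyV A b) : ρ ⬝ᵥ b ≤ c ⬝ᵥ v := by
  rw [dotProduct_eq_dotProduct_mulVec_of_transpose_mulVec hAρ]
  exact dotProduct_le_dotProduct_of_nonneg_left hv hρ

theorem Vstar_eq_of_complementary (hρ : 0 ≤ ρ) (hAρ : Aᵀ *ᵥ ρ = c) {v₀ : Fin n → ℝ}
    (hv₀ : v₀ ∈ polyV A b) (hslack : ∀ j, 0 < ρ j → A j ⬝ᵥ v₀ = b j) :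
    Vstar A b c = {v ∈ polyV A b | ∀ j, 0 < ρ j → A j ⬝ᵥ v = b j} := by
  have hz : zstar A b c = ρ ⬝ᵥ b := by
    refine IsLeast.csInf_eq ⟨⟨v₀, hv₀, ?_⟩, ?_⟩
    · exact (dotProduct_eq_iff_of_transpose_mulVec hρ hAρ hv₀).2 hslack
    · rintro _ ⟨v, hv, rfl⟩
      exact dotProduct_le_of_transpose_mulVec hρ hAρ hv
  ext v
  simp only [Vstar, mem_ofPred_eq, hz]
  exact and_congr_right (dotProduct_eq_iff_of_transpose_mulVec hρ hAρ)

end Polyhedron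

theorem stmt_10 (m n N K : ℕ)
    (A : Matrix (Fin m) (Fin n) ℝ) (b : Fin m → ℝ)
    (hne : (polyV A b).Nonempty) (hbd : Bornology.IsBounded (polyV A b))
    (x : Fin N → Fin K → ℝ)
    (ωhat : Matrix (Fin n) (Fin K) ℝ) (ρhat : Fin N → Fin m → ℝ)
    (hhat : ∀ i, 0 ≤ ρhat i ∧ Aᵀ.mulVec (ρhat i) = ωhat.mulVec (x i) ∧
        Vstar A b (ωhat.mulVec (x i)) =
          {v ∈ polyV A b | ∀ j, 0 < ρhat i j → A j ⬝ᵥ v = b j})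
    (ωt : Matrix (Fin n) (Fin K) ℝ) (ρt : Fin N → Fin m → ℝ)
    (ht : ∀ i, Aᵀ.mulVec (ρt i) = ωt.mulVec (x i) ∧
        (∀ j, 0 < ρhat i j → 1 ≤ ρt i j) ∧
        (∀ j, ρhat i j = 0 → ρt i j = 0)) :
    ∀ i, Vstar A b (ωt.mulVec (x i)) = Vstar A b (ωhat.mulVec (x i)) := by
  intro i
  obtain ⟨hρhat, -, hVhat⟩ := hhat i
  obtain ⟨hAρt, hge, hzero⟩ := ht i
  have hsupp : ∀ j, 0 < ρt i j ↔ 0 < ρhat i j := fun j =>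
    (hρhat j).eq_or_lt.elim (fun h => by simp [← h, hzero j h.symm])
      fun h => iff_of_true (zero_lt_one.trans_le (hge j h)) h
  have hρt : 0 ≤ ρt i := fun j =>
    (hρhat j).eq_or_lt.elim (fun h => (hzero j h.symm).ge)
      fun h => zero_le_one.trans (hge j h)
  obtain ⟨v₀, hv₀⟩ := Vstar_nonempty (c := ωhat *ᵥ x i) hne hbd
  rw [hVhat] at hv₀ ⊢
  rw [Vstar_eq_of_complementary hρt hAρt hv₀.1 fun j hj => hv₀.2 j ((hsupp j).1 hj)]
  simp only [hsupp]
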